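/- arXiv:1612.07150 — 3 statements merged into one kernel-verified Lean document; each statement's English description precedes it below -/
import Mathlib

section
/- Let K ⊆ L be finite fields with [L : K] = m, let β = (β₁, …, β_m) be a basis of L over K, and let β^⊥ = (β₁^⊥, …, β_m^⊥) be the dual basis of β with respect to the trace form, i.e., Tr_{L/K}(β_i β_j^⊥) = δ_{ij}. For a basis γ of L over K, let Φ_γ : Lⁿ → K^{n×m} denote the K-linear expansion map sending c = (c₁, …, c_n) to the tuple whose (i, j)-entry is the j-th coordinate of c_i with respect to γ. Then for every L-linear code C ⊆ Lⁿ, the Euclidean dual over K of the expanded code Φ_β(C) equals the expansion with respect to the dual basis of the Euclidean dual of C over L: (Φ_β(C))^⊥ = Φ_{β^⊥}(C^⊥). (This is the identity [β(C)]^⊥ = β^⊥(C^⊥) used in the proof that code expansion yields asymptotically good quantum codes over prime fields.) -/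
/-- The Euclidean dual of a code `C ⊆ Rⁱ` (as a set):
all vectors whose standard dot product with every codeword is zero. -/
def eucDual {R : Type*} [CommRing R] {ι : Type*} [Fintype ι] (C : Set (ι → R)) :
    Set (ι → R) :=
  {v | ∀ c ∈ C, ∑ i, v i * c i = 0}

/-- The expansion of a vector `c ∈ Lⁿ` with respect to a `K`-basis `γ` of `L`:
the `(i, j)` entry is the `j`-th coordinate of `c i` with respect to `γ`. -/
noncomputable def expand {K L : Type*} [Field K] [Field L] [Algebra K L] {m : ℕ}
    (γ : Module.Basis (Fin m) K L) {n : ℕ} (c : Fin n → L) : Fin n × Fin m → K :=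
  fun p => γ.repr (c p.1) p.2

/-!
Coordinates with respect to `β` are read off by the trace against the dual basis,
`β.repr x j = Tr(x β'ⱼ)`, so the `K`-dot product of `Φ_{β'}(w)` and `Φ_β(c)` is `Tr(∑ wᵢ cᵢ)`.
An `L`-linear code is closed under scaling by every `a ∈ L`, and `Tr(a s) = 0` for all `a`
forces `s = 0`; hence `Φ_{β'}(w) ⊥ Φ_β(C)` exactly when `w ∈ C^⊥`. Since `Φ_{β'}` is a bijection,
this is the claimed equality of sets.
-/

open Finset

section TraceDual

variable {R S ι : Type*} [CommRing R] [CommRing S] [Algebra R S] [Fintype ι] [DecidableEq ι]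
  {β β' : Module.Basis ι R S}

theorem Module.Basis.trace_mul_eq_repr_of_trace_dual
    (hdual : ∀ i j, Algebra.trace R S (β i * β' j) = if i = j then 1 else 0) (x : S) (j : ι) :
    Algebra.trace R S (x * β' j) = β.repr x j := by
  conv_lhs => rw [← β.sum_repr x]
  simp only [sum_mul, map_sum, smul_mul_assoc, map_smul, hdual]
  simp

theorem eq_zero_of_forall_trace_mul_eq_zero
    (hdual : ∀ i j, Algebra.trace R S (β i * β' j) = if i = j then 1 else 0) {s : S}
    (h : ∀ a, Algebra.trace R S (s * a) = 0) : s = 0 :=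
  β.ext_elem fun j => by simp [← β.trace_mul_eq_repr_of_trace_dual hdual, h]

theorem forall_trace_sum_mul_eq_zero_iff_mem_eucDual {κ : Type*} [Fintype κ]
    (hdual : ∀ i j, Algebra.trace R S (β i * β' j) = if i = j then 1 else 0)
    (C : Submodule S (κ → S)) (w : κ → S) :
    (∀ c ∈ C, Algebra.trace R S (∑ i, w i * c i) = 0) ↔ w ∈ eucDual (C : Set (κ → S)) := by
  refine ⟨fun h c hc => eq_zero_of_forall_trace_mul_eq_zero hdual fun a => ?_,
    fun h c hc => by rw [h c hc, map_zero]⟩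
  rw [sum_mul]
  simpa only [Pi.smul_apply, smul_eq_mul, mul_assoc, mul_comm a] using h (a • c) (C.smul_mem a hc)

end TraceDual

section Expansion

variable {K L : Type*} [Field K] [Field L] [Algebra K L] {m n : ℕ}

theorem expand_injective (γ : Module.Basis (Fin m) K L) :
    Function.Injective (expand γ (n := n)) :=
  fun _ _ h => funext fun i => γ.ext_elem fun j => congrFun h (i, j)

theorem expand_surjective (γ : Module.Basis (Fin m) K L) :
    Function.Surjective (expand γ (n := n)) :=
  fun v => ⟨fun i => γ.equivFun.symm fun j => v (i, j), funext fun p => by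
    rw [expand, ← γ.equivFun_apply, γ.equivFun.apply_symm_apply]⟩

variable {β β' : Module.Basis (Fin m) K L}

theorem sum_expand_mul_expand
    (hdual : ∀ i j, Algebra.trace K L (β i * β' j) = if i = j then 1 else 0)
    (w c : Fin n → L) :
    ∑ p, expand β' w p * expand β c p = Algebra.trace K L (∑ i, w i * c i) := by
  rw [map_sum, Fintype.sum_prod_type]
  refine sum_congr rfl fun i _ => ?_
  simp only [expand, ← β.trace_mul_eq_repr_of_trace_dual hdual]
  conv_rhs => rw [← β'.sum_repr (w i)]
  simp only [sum_mul, map_sum, smul_mul_assoc, map_smul, smul_eq_mul, mul_comm (c i)]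

theorem expand_mem_eucDual_image_iff
    (hdual : ∀ i j, Algebra.trace K L (β i * β' j) = if i = j then 1 else 0)
    (C : Set (Fin n → L)) (w : Fin n → L) :
    expand β' w ∈ eucDual (expand β '' C) ↔ ∀ c ∈ C, Algebra.trace K L (∑ i, w i * c i) = 0 := by
  simp only [eucDual, Set.forall_mem_image, Set.mem_ofPred_eq, sum_expand_mul_expand hdual]

end Expansion

theorem dual_of_expanded_code_general
    (K L : Type*) [Field K] [Field L] [Algebra K L]
    (m n : ℕ)
    (β β' : Module.Basis (Fin m) K L)
    (hdual : ∀ i j, Algebra.trace K L (β i * β' j) = if i = j then 1 else 0)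
    (C : Submodule L (Fin n → L)) :
    eucDual (expand β '' (C : Set (Fin n → L))) =
      expand β' '' eucDual (C : Set (Fin n → L)) := by
  ext v
  obtain ⟨w, rfl⟩ := expand_surjective β' v
  rw [(expand_injective β').mem_set_image, expand_mem_eucDual_image_iff hdual]
  exact forall_trace_sum_mul_eq_zero_iff_mem_eucDual hdual C w

/-- For finite fields `K ⊆ L` with `[L : K] = m`, a basis `β` of `L` over `K` and its
trace-dual basis `β'`, the Euclidean dual over `K` of the expansion of an `L`-linear
code `C` with respect to `β` equals the expansion with respect to `β'` of the
Euclidean dual of `C` over `L`:  `(Φ_β(C))^⊥ = Φ_{β^⊥}(C^⊥)`. -/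
theorem dual_of_expanded_code
    (K L : Type*) [Field K] [Field L] [Algebra K L] [Fintype K] [Fintype L]
    (m n : ℕ) (hm : Module.finrank K L = m)
    (β β' : Module.Basis (Fin m) K L)
    (hdual : ∀ i j, Algebra.trace K L (β i * β' j) = if i = j then 1 else 0)
    (C : Submodule L (Fin n → L)) :
    eucDual (expand β '' (C : Set (Fin n → L))) =
      expand β' '' eucDual (C : Set (Fin n → L)) :=
  dual_of_expanded_code_general K L m n β β' hdual C
end

section
/- Let K ⊆ L be finite fields with [L : K] = m, let β be a basis of L over K, and let Φ_β : Lⁿ → K^{n×m} denote the K-linear expansion map sending c = (c₁, …, c_n) to the tuple whose (i, j)-entry is the j-th coordinate of c_i with respect to β. Let C ⊆ Lⁿ be an L-linear code. Then every nonzero vector in the Euclidean dual over K of the expanded code, (Φ_β(C))^⊥ ⊆ K^{n×m}, has Hamming weight at least min{ wt(x) : x ∈ C^⊥, x ≠ 0 }, where C^⊥ is the Euclidean dual of C over L. (This is the parenthetical claim in the proof of Theorem on asymptotically good quantum codes over prime fields: since [β(C₁)]^⊥ = β^⊥(C₁^⊥), the minimum distance of [β(C₁)]^⊥ is at least the minimum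 distance of C₁^⊥.) -/
/-!
Let `β^∨` be the basis of `L` dual to `β` under the trace form, so that `β.repr a j = Tr(a β^∨ⱼ)`.
A vector `v ∈ K^{n×m}` is the expansion of `x ∈ Lⁿ` with respect to `β^∨`, where
`xᵢ = ∑ⱼ v(i, j) β^∨ⱼ`; then `Tr(⟨x, c⟩) = ⟨v, Φ_β(c)⟩` for every `c ∈ Lⁿ`. If `v ⊥ Φ_β(C)`,
then `Tr(α ⟨x, c⟩) = ⟨v, Φ_β(α c)⟩ = 0` for all `α ∈ L` and `c ∈ C`, so `x ∈ C^⊥` by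
nondegeneracy of the trace form. Finally `x ≠ 0` when `v ≠ 0`, and `xᵢ = 0` whenever the
`i`-th row of `v` vanishes, so `wt(x) ≤ wt(v)`.
-/

open Module

theorem hammingNorm_comp_curry_le {ι κ M N : Type*} [Fintype ι] [Fintype κ] [Zero M] [Zero N]
    [DecidableEq M] [DecidableEq N] (f : (κ → M) → N) (hf : f 0 = 0) (v : ι × κ → M) :
    hammingNorm (f ∘ Function.curry v) ≤ hammingNorm v := by
  classical
  have hsupp : ({i | f (fun j => v (i, j)) ≠ 0} : Finset ι) ⊆
      ({p | v p ≠ 0} : Finset (ι × κ)).image Prod.fst := by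
    intro i hi
    rw [Finset.mem_filter] at hi
    obtain ⟨j, hj⟩ : ∃ j, v (i, j) ≠ 0 := by
      by_contra! hrow
      exact hi.2 (by rw [show (fun j => v (i, j)) = 0 from funext hrow, hf])
    exact Finset.mem_image.mpr ⟨(i, j), by simpa using hj, rfl⟩
  exact (Finset.card_le_card hsupp).trans Finset.card_image_le

theorem Module.Basis.repr_eq_trace_mul_traceDual {ι K L : Type*} [Field K] [Field L]
    [Algebra K L] [FiniteDimensional K L] [Algebra.IsSeparable K L] [Finite ι] [DecidableEq ι]
    (β : Basis ι K L) (a : L) (j : ι) :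
    β.repr a j = Algebra.trace K L (a * β.traceDual j) := by
  conv_lhs => rw [← β.traceDual_traceDual]
  rw [Basis.traceDual_repr_apply, Algebra.traceForm_apply]

section Collapse

variable {K L : Type*} [Field K] [Field L] [Algebra K L] [FiniteDimensional K L]
  [Algebra.IsSeparable K L] {m n : ℕ}

/-- The inverse of `expand β.traceDual`: the map written `β^⊥` in the paper. -/
noncomputable def collapse (β : Basis (Fin m) K L) (v : Fin n × Fin m → K) : Fin n → L :=
  fun i => β.traceDual.equivFun.symm fun j => v (i, j)

theorem expand_traceDual_collapse (β : Basis (Fin m) K L) (v : Fin n × Fin m → K) :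
    expand β.traceDual (collapse β v) = v :=
  funext fun p => congrFun (β.traceDual.equivFun.apply_symm_apply fun j => v (p.1, j)) p.2

theorem collapse_ne_zero (β : Basis (Fin m) K L) {v : Fin n × Fin m → K} (hv : v ≠ 0) :
    collapse β v ≠ 0 := by
  intro h
  apply hv
  rw [← expand_traceDual_collapse β v, h]
  funext p
  simp [expand]

theorem trace_collapse_mul (β : Basis (Fin m) K L) (v : Fin n × Fin m → K) (i : Fin n) (a : L) :
    Algebra.trace K L (collapse β v i * a) = ∑ j, v (i, j) * β.repr a j := by
  simp only [collapse, Basis.equivFun_symm_apply, Finset.sum_mul, map_sum, smul_mul_assoc,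
    map_smul, smul_eq_mul, β.repr_eq_trace_mul_traceDual, mul_comm a]

theorem trace_dotProduct_collapse (β : Basis (Fin m) K L) (v : Fin n × Fin m → K)
    (c : Fin n → L) :
    Algebra.trace K L (∑ i, collapse β v i * c i) = ∑ p, v p * expand β c p := by
  simp only [map_sum, trace_collapse_mul, Fintype.sum_prod_type, expand]

theorem collapse_mem_eucDual (β : Basis (Fin m) K L) (C : Submodule L (Fin n → L))
    {v : Fin n × Fin m → K} (hv : v ∈ eucDual (expand β '' (C : Set (Fin n → L)))) :
    collapse β v ∈ eucDual (C : Set (Fin n → L)) := by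
  intro c hc
  refine (traceForm_nondegenerate K L).1 _ fun α => ?_
  have hαc : ∑ i, collapse β v i * c i * α = ∑ i, collapse β v i * (α • c) i := by
    simp only [Pi.smul_apply, smul_eq_mul, mul_left_comm α, mul_comm _ α]
  rw [Algebra.traceForm_apply, Finset.sum_mul, hαc, trace_dotProduct_collapse]
  exact hv _ ⟨α • c, C.smul_mem α hc, rfl⟩

end Collapse

theorem dual_expanded_code_min_weight_general
    (K L : Type*) [Field K] [Field L] [Algebra K L] [Fintype K]
    [DecidableEq K] [DecidableEq L]
    (m n : ℕ)
    (β : Module.Basis (Fin m) K L) (C : Submodule L (Fin n → L))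
    (v : Fin n × Fin m → K)
    (hv : v ∈ eucDual (expand β '' (C : Set (Fin n → L)))) (hv0 : v ≠ 0) :
    sInf {w | ∃ x ∈ eucDual (C : Set (Fin n → L)), x ≠ 0 ∧ hammingNorm x = w}
      ≤ hammingNorm v := by
  have : FiniteDimensional K L := β.finiteDimensional_of_finite
  calc sInf {w | ∃ x ∈ eucDual (C : Set (Fin n → L)), x ≠ 0 ∧ hammingNorm x = w}
      ≤ hammingNorm (collapse β v) :=
        Nat.sInf_le ⟨_, collapse_mem_eucDual β C hv, collapse_ne_zero β hv0, rfl⟩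
    _ ≤ hammingNorm v := hammingNorm_comp_curry_le _ (map_zero _) v

/-- Every nonzero vector in the Euclidean dual over `K` of the expanded code
`Φ_β(C) ⊆ K^{n×m}` has Hamming weight at least the minimum weight of a nonzero
vector of the Euclidean dual `C^⊥` of `C` over `L`. -/
theorem dual_expanded_code_min_weight
    (K L : Type*) [Field K] [Field L] [Algebra K L] [Fintype K] [Fintype L]
    [DecidableEq K] [DecidableEq L]
    (m n : ℕ) (hm : Module.finrank K L = m)
    (β : Module.Basis (Fin m) K L) (C : Submodule L (Fin n → L))
    (v : Fin n × Fin m → K)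
    (hv : v ∈ eucDual (expand β '' (C : Set (Fin n → L)))) (hv0 : v ≠ 0) :
    sInf {w | ∃ x ∈ eucDual (C : Set (Fin n → L)), x ≠ 0 ∧ hammingNorm x = w}
      ≤ hammingNorm v :=
  dual_expanded_code_min_weight_general K L m n β C v hv hv0
end

section
/- Let q be a prime power, let F be a finite field with q² elements, and let m be a positive integer dividing q + 1. Then the number of pairs (x, y) ∈ F × F satisfying y^q + y = x^m is exactly q·(1 + (q − 1)·m). (This is the count of affine F_{q²}-rational points of the curve y^q + y = x^m with m | (q+1), which together with the single place at infinity gives the N = 1 + q(1 + (q−1)m) rational places used in the one-point, two-point and t-point quantum code constructions; the Hermitian curve y^q + y = x^{q+1} is the special case m = q + 1.) -/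
open Polynomial Finset

private lemma card_root_le' {F : Type*} [Field F] [Fintype F] [DecidableEq F]
    (p : F[X]) (hp : p ≠ 0) :
    (Finset.univ.filter fun y : F => p.eval y = 0).card ≤ p.natDegree := by
  have hsub : (Finset.univ.filter fun y : F => p.eval y = 0) ⊆ p.roots.toFinset := by
    intro y hy
    simp only [Finset.mem_filter, Finset.mem_univ, true_and] at hy
    simp [Multiset.mem_toFinset, mem_roots', hp, IsRoot, hy]
  calc (Finset.univ.filter fun y : F => p.eval y = 0).card
      ≤ p.roots.toFinset.card := Finset.card_le_card hsub
    _ ≤ Multiset.card p.roots := Multiset.toFinset_card_le _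
    _ ≤ p.natDegree := p.card_roots'

/-- The affine point count of the curve `y^q + y = x^m` over the field with `q²`
elements, for `m` dividing `q + 1`: there are exactly `q(1 + (q − 1)m)` pairs
`(x, y)` with `y^q + y = x^m`. -/
theorem point_count_curve (q m : ℕ) (hq : IsPrimePow q)
    (F : Type*) [Field F] [Fintype F] (hF : Fintype.card F = q ^ 2)
    (hm : 0 < m) (hdvd : m ∣ q + 1) :
    Nat.card {p : F × F // p.2 ^ q + p.2 = p.1 ^ m} = q * (1 + (q - 1) * m) := by
  classical
  have hq2 : 2 ≤ q := hq.two_le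
  have hq0 : q ≠ 0 := by omega
  obtain ⟨p, k, hp, hk, hqpk⟩ := hq
  have hp' : Nat.Prime p := Nat.prime_iff.mpr hp
  -- the characteristic of F is p
  haveI : Fact (Nat.Prime (ringChar F)) := ⟨CharP.char_is_prime F _⟩
  obtain ⟨n, hnp, hcard⟩ := FiniteField.card F (ringChar F)
  have hpchar : p = ringChar F := by
    have hdp : p ∣ ringChar F ^ (n : ℕ) := by
      rw [← hcard, hF, ← hqpk, ← pow_mul]
      exact dvd_pow_self p (by positivity)
    exact (Nat.prime_dvd_prime_iff_eq hp' hnp).mp (hp'.dvd_of_dvd_pow hdp)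
  haveI : CharP F p := by rw [hpchar]; exact ringChar.charP F
  haveI : Fact (Nat.Prime p) := ⟨hp'⟩
  have hadd : ∀ a b : F, (a + b) ^ q = a ^ q + b ^ q := by
    intro a b
    rw [← hqpk]
    exact add_pow_char_pow a b p k
  -- the additive map φ y = y^q + y
  set φ : F →+ F :=
    { toFun := fun y => y ^ q + y
      map_zero' := by simp [zero_pow hq0]
      map_add' := fun a b => by simp only [hadd]; ring } with hφ
  have hφ_apply : ∀ y : F, φ y = y ^ q + y := fun _ => rfl
  have hpow_card : ∀ y : F, y ^ q ^ 2 = y := by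
    intro y
    have := FiniteField.pow_card y
    rwa [hF] at this
  have hfix : ∀ y : F, (φ y) ^ q = φ y := by
    intro y
    rw [hφ_apply, hadd, ← pow_mul, ← pow_two, hpow_card]
    ring
  -- counting the kernel and the fixed field
  set Kfin : Finset F := Finset.univ.filter fun z : F => z ^ q = z with hK
  set kerfin : Finset F := Finset.univ.filter fun y : F => y ^ q + y = 0 with hkerfin
  have hXq_ne : ∀ c : F[X], c.natDegree ≤ 1 → (X ^ q + c : F[X]) ≠ 0 := by
    intro c hc h0
    have hdeg : (X ^ q + c : F[X]).natDegree = q := by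
      rw [natDegree_add_eq_left_of_natDegree_lt]
      · exact natDegree_X_pow q
      · rw [natDegree_X_pow]; omega
    rw [h0, natDegree_zero] at hdeg
    omega
  have hdegXq : ∀ c : F[X], c.natDegree ≤ 1 → (X ^ q + c : F[X]).natDegree = q := by
    intro c hc
    rw [natDegree_add_eq_left_of_natDegree_lt]
    · exact natDegree_X_pow q
    · rw [natDegree_X_pow]; omega
  have hK_le : Kfin.card ≤ q := by
    have h := card_root_le' (X ^ q + (-X) : F[X])
      (hXq_ne _ (by simp [natDegree_neg]))
    rw [hdegXq _ (by simp [natDegree_neg])] at h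
    refine le_trans (le_of_eq ?_) h
    congr 1
    apply Finset.filter_congr
    intro z _
    simp [add_neg_eq_zero, eq_comm]
  have hker_le : kerfin.card ≤ q := by
    have h := card_root_le' (X ^ q + X : F[X]) (hXq_ne _ (by simp))
    rw [hdegXq _ (by simp)] at h
    refine le_trans (le_of_eq ?_) h
    congr 1
    apply Finset.filter_congr
    intro z _
    simp
  -- first isomorphism theorem counting
  have hker_card : Nat.card φ.ker = kerfin.card := by
    have e : φ.ker ≃ {y : F // y ^ q + y = 0} :=
      Equiv.subtypeEquivRight fun y => by
        rw [AddMonoidHom.mem_ker, hφ_apply]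
    rw [Nat.card_congr e, Nat.card_eq_fintype_card, hkerfin, Fintype.card_subtype]
  have hrangeK : ∀ z : F, z ∈ φ.range → z ∈ Kfin := by
    rintro z ⟨y, rfl⟩
    simp only [hK, Finset.mem_filter, Finset.mem_univ, true_and]
    exact hfix y
  set Rfin : Finset F := Finset.univ.filter fun z : F => z ∈ φ.range with hRfin
  have hRsub : Rfin ⊆ Kfin := by
    intro z hz
    simp only [hRfin, Finset.mem_filter, Finset.mem_univ, true_and] at hz
    exact hrangeK z hz
  have hR_card : Nat.card φ.range = Rfin.card := by
    have h1 : Nat.card φ.range = Nat.card (φ.range : Set F) := rfl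
    rw [h1, Nat.card_coe_set_eq, ← Set.ncard_coe_finset Rfin]
    congr 1
    ext z
    simp [hRfin]
  have hsplit : Rfin.card * kerfin.card = q ^ 2 := by
    have h1 : Nat.card F = Nat.card (F ⧸ φ.ker) * Nat.card φ.ker :=
      AddSubgroup.card_eq_card_quotient_mul_card_addSubgroup φ.ker
    have h2 : Nat.card (F ⧸ φ.ker) = Nat.card φ.range :=
      Nat.card_congr (QuotientAddGroup.quotientKerEquivRange φ).toEquiv
    rw [h2, hker_card, hR_card, Nat.card_eq_fintype_card, hF] at h1
    exact h1.symm
  have hR_le : Rfin.card ≤ q := le_trans (Finset.card_le_card hRsub) hK_le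
  have hsplit' : Rfin.card * kerfin.card = q * q := by rw [hsplit, pow_two]
  have hkerq : kerfin.card = q := by
    have h1 : q * q ≤ q * kerfin.card := by
      calc q * q = Rfin.card * kerfin.card := hsplit'.symm
        _ ≤ q * kerfin.card := Nat.mul_le_mul_right _ hR_le
    have h2 : q ≤ kerfin.card := Nat.le_of_mul_le_mul_left h1 (by omega)
    omega
  have hRq : Rfin.card = q := by
    rw [hkerq] at hsplit'
    exact Nat.eq_of_mul_eq_mul_right (by omega) hsplit'
  have hRK : Rfin = Kfin := Finset.eq_of_subset_of_card_le hRsub (by omega)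
  have hsurj : ∀ z : F, z ^ q = z → z ∈ φ.range := by
    intro z hz
    have : z ∈ Kfin := by simp [hK, hz]
    rw [← hRK] at this
    simpa [hRfin] using this
  -- fiber counting
  have hfiber : ∀ c : F, Nat.card {y : F // y ^ q + y = c} = if c ^ q = c then q else 0 := by
    intro c
    split_ifs with hc
    · obtain ⟨y₀, hy₀⟩ := hsurj c hc
      have hy₀' : y₀ ^ q + y₀ = c := hy₀
      have hsub : ∀ a b : F, (a - b) ^ q + (a - b) = (a ^ q + a) - (b ^ q + b) := by
        intro a b
        have h := map_sub φ a b
        simpa only [hφ_apply] using h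
      have haddf : ∀ a b : F, (a + b) ^ q + (a + b) = (a ^ q + a) + (b ^ q + b) := by
        intro a b
        have h := map_add φ a b
        simpa only [hφ_apply] using h
      have e : {y : F // y ^ q + y = c} ≃ {y : F // y ^ q + y = 0} :=
        { toFun := fun y => ⟨y.1 - y₀, by rw [hsub, y.2, hy₀', sub_self]⟩
          invFun := fun y => ⟨y.1 + y₀, by rw [haddf, y.2, hy₀', zero_add]⟩
          left_inv := fun y => by ext; simp
          right_inv := fun y => by ext; simp }
      rw [Nat.card_congr e, Nat.card_eq_fintype_card, Fintype.card_subtype, ← hkerfin, hkerq]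
    · have : IsEmpty {y : F // y ^ q + y = c} := by
        constructor
        rintro ⟨y, hy⟩
        exact hc (by rw [← hy]; exact hfix y)
      exact Nat.card_of_isEmpty
  -- the count over x
  have hcond : ∀ x : F, ((x ^ m) ^ q = x ^ m) ↔ (x = 0 ∨ x ^ (m * (q - 1)) = 1) := by
    intro x
    constructor
    · intro h
      by_cases hx : x = 0
      · exact Or.inl hx
      · right
        have hxm : x ^ m ≠ 0 := pow_ne_zero m hx
        have : x ^ m * x ^ (m * (q - 1)) = x ^ m * 1 := by
          rw [mul_one, ← pow_add, ← h, ← pow_mul]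
          congr 1
          have : m + m * (q - 1) = m * q := by
            have : q - 1 + 1 = q := by omega
            calc m + m * (q - 1) = m * ((q - 1) + 1) := by ring
              _ = m * q := by rw [this]
          rw [this, mul_comm m q]
        exact mul_left_cancel₀ hxm this
    · rintro (rfl | h)
      · rw [zero_pow hm.ne', zero_pow hq0]
      · rw [← pow_mul, mul_comm m q]
        have hq' : q * m = m + m * (q - 1) := by
          have h1 : q - 1 + 1 = q := by omega
          calc q * m = m * ((q - 1) + 1) := by rw [h1]; ring
            _ = m + m * (q - 1) := by ring
        rw [hq', pow_add, h, mul_one]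
  -- count of x with x^m in the image
  set nn := m * (q - 1) with hnn
  have hnn_pos : 0 < nn := by
    have : 1 ≤ q - 1 := by omega
    exact Nat.mul_pos hm (by omega)
  have hnn_dvd : nn ∣ q ^ 2 - 1 := by
    obtain ⟨s, rfl⟩ : ∃ s : ℕ, q = s + 2 := ⟨q - 2, by omega⟩
    have h1 : (s + 2) ^ 2 - 1 = (s + 2 + 1) * (s + 2 - 1) := by
      have h2 : (s + 2) ^ 2 = (s + 3) * (s + 1) + 1 := by ring
      simp [h2]
    rw [h1]
    exact mul_dvd_mul hdvd dvd_rfl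
  -- primitive root and number of nn-th roots of unity
  obtain ⟨g, hg⟩ := IsCyclic.exists_generator (α := Fˣ)
  have horder : orderOf (g : F) = q ^ 2 - 1 := by
    rw [orderOf_units, ← Nat.card_zpowers, (Subgroup.zpowers g).eq_top_iff'.mpr hg,
      Subgroup.card_top, Nat.card_units, Nat.card_eq_fintype_card, hF]
  have hprim : IsPrimitiveRoot (g : F) (q ^ 2 - 1) := by
    rw [← horder]; exact IsPrimitiveRoot.orderOf _
  have hq21 : 0 < q ^ 2 - 1 := by
    have h4 : 2 * 2 ≤ q * q := Nat.mul_le_mul hq2 hq2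
    rw [pow_two]
    omega
  obtain ⟨d, hd⟩ := hnn_dvd
  have hprim' : IsPrimitiveRoot ((g : F) ^ d) nn :=
    hprim.pow hq21 (by rw [hd]; ring)
  have hroots : (nthRootsFinset nn (1 : F)).card = nn := hprim'.card_nthRootsFinset
  have hfilter :
      (Finset.univ.filter fun x : F => (x ^ m) ^ q = x ^ m) = insert 0 (nthRootsFinset nn (1 : F)) := by
    ext x
    simp only [Finset.mem_filter, Finset.mem_univ, true_and, Finset.mem_insert,
      mem_nthRootsFinset hnn_pos]
    rw [hcond]
  have h0notin : (0 : F) ∉ nthRootsFinset nn (1 : F) := by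
    rw [mem_nthRootsFinset hnn_pos]
    simp [zero_pow hnn_pos.ne']
  have hfiltercard :
      (Finset.univ.filter fun x : F => (x ^ m) ^ q = x ^ m).card = nn + 1 := by
    rw [hfilter, Finset.card_insert_of_notMem h0notin, hroots]
  -- put it together
  have hmain : Nat.card {p : F × F // p.2 ^ q + p.2 = p.1 ^ m}
      = ∑ x : F, Nat.card {y : F // y ^ q + y = x ^ m} := by
    rw [Nat.card_congr (Equiv.subtypeProdEquivSigmaSubtype fun a b : F => b ^ q + b = a ^ m),
      Nat.card_eq_fintype_card, Fintype.card_sigma]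
    congr 1
    ext x
    rw [Nat.card_eq_fintype_card]
  rw [hmain]
  have : ∀ x : F, Nat.card {y : F // y ^ q + y = x ^ m}
      = if (x ^ m) ^ q = x ^ m then q else 0 := fun x => hfiber (x ^ m)
  simp only [this]
  rw [Finset.sum_ite, Finset.sum_const, Finset.sum_const_zero, add_zero, smul_eq_mul,
    hfiltercard]
  rw [hnn]
  ring_nf
end
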